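/- arXiv:2203.11855 — 3 statements merged into one kernel-verified Lean document; each statement's English description precedes it below -/
import Mathlib

section
/- Let p be a prime, L a field of characteristic p, and φ a ring automorphism of L. Let c be an element of the prime field 𝔽_p viewed inside L with c ≠ 0 and c ≠ 1. Then for every α ∈ L for which there exists n ∈ ℕ with φ^[p^n](α) = α, there exists β ∈ L such that φ(β) − c·β = α; moreover β can be chosen so that φ^[p^n](β) = β. (In particular, if every element of L is fixed by some p-power iterate of φ, the additive map x ↦ φ(x) − c·x is surjective on L.) -/
private lemma ringEquiv_coe_pow {L : Type*} [Field L] (φ : L ≃+* L) (m : ℕ) :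
    ⇑(φ ^ m) = (⇑φ)^[m] := by
  induction m with
  | zero => rfl
  | succ k ih =>
    funext x
    rw [pow_succ, Function.iterate_succ_apply]
    show (φ ^ k) (φ x) = (⇑φ)^[k] (φ x)
    rw [ih]

/-- One-dimensional case (d = 1) of the residue-field surjectivity claim in Lemma 3:
for a field `L` of characteristic `p`, a ring automorphism `φ` of `L`, and an element
`c` of the prime field `𝔽_p ⊆ L` with `c ≠ 0` and `c ≠ 1`, every `α ∈ L` fixed by
some `p`-power iterate of `φ` is of the form `φ(β) - c·β`, with `β` fixed by the same
iterate. -/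
theorem stmt0 (p : ℕ) (hp : p.Prime) (L : Type*) [Field L] [CharP L p]
    (φ : L ≃+* L) (c : L)
    (hc : ∃ c₀ : ZMod p, ZMod.castHom (dvd_refl p) L c₀ = c)
    (hc0 : c ≠ 0) (hc1 : c ≠ 1) :
    ∀ (α : L) (n : ℕ), (⇑φ)^[p ^ n] α = α →
      ∃ β : L, φ β - c * β = α ∧ (⇑φ)^[p ^ n] β = β := by
  haveI : Fact p.Prime := ⟨hp⟩
  obtain ⟨c₀, hc₀⟩ := hc
  have hφc : φ c = c := by
    have h := RingHom.ext_zmod ((φ : L →+* L).comp (ZMod.castHom (dvd_refl p) L))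
      (ZMod.castHom (dvd_refl p) L)
    have := DFunLike.congr_fun h c₀
    simpa [hc₀] using this
  intro α n hα
  set q := p ^ n with hq
  have hcq : c ^ q = c := by
    rw [← hc₀, ← map_pow, ZMod.pow_card_pow]
  have hone : (1 : L) - c ≠ 0 := sub_ne_zero.mpr (Ne.symm hc1)
  set S : L := ∑ j ∈ Finset.range q, c ^ (q - 1 - j) * (⇑φ)^[j] α with hS
  set A : L := ∑ j ∈ Finset.range q, c ^ (q - 1 - j) * (⇑φ)^[j + 1] α with hA
  have hqpos : 0 < q := pow_pos hp.pos n
  have key : A - c * S = α - c * α := by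
    have tele : ∑ j ∈ Finset.range q,
        (c ^ (q - (j + 1)) * (⇑φ)^[j + 1] α - c ^ (q - j) * (⇑φ)^[j] α)
        = c ^ (q - q) * (⇑φ)^[q] α - c ^ (q - 0) * (⇑φ)^[0] α :=
      Finset.sum_range_sub (fun j => c ^ (q - j) * (⇑φ)^[j] α) q
    have lhs_eq : ∑ j ∈ Finset.range q,
        (c ^ (q - (j + 1)) * (⇑φ)^[j + 1] α - c ^ (q - j) * (⇑φ)^[j] α)
        = A - c * S := by
      rw [hA, hS, Finset.mul_sum, ← Finset.sum_sub_distrib]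
      refine Finset.sum_congr rfl fun j hj => ?_
      have hjq : j < q := Finset.mem_range.mp hj
      have h1 : q - (j + 1) = q - 1 - j := by omega
      have h2 : c * (c ^ (q - 1 - j) * (⇑φ)^[j] α) = c ^ (q - j) * (⇑φ)^[j] α := by
        rw [← mul_assoc, ← pow_succ']
        congr 2
        omega
      rw [h1, h2]
    rw [lhs_eq] at tele
    rw [tele, Nat.sub_self, Nat.sub_zero, pow_zero, one_mul, hα, hcq,
      Function.iterate_zero_apply]
  refine ⟨(1 - c)⁻¹ * S, ?_, ?_⟩
  · have hφβ : φ ((1 - c)⁻¹ * S) = (1 - c)⁻¹ * A := by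
      rw [map_mul, map_inv₀, map_sub, map_one, hφc, hS, map_sum, hA]
      congr 1
      refine Finset.sum_congr rfl fun j _ => ?_
      rw [map_mul, map_pow, hφc, ← Function.iterate_succ_apply' φ]
    rw [hφβ]
    have : (1 - c)⁻¹ * A - c * ((1 - c)⁻¹ * S) = (1 - c)⁻¹ * (A - c * S) := by ring
    rw [this, key]
    field_simp
  · have hcoe : (⇑φ)^[q] = ⇑(φ ^ q) := (ringEquiv_coe_pow φ q).symm
    rw [hcoe]
    have hψc : (φ ^ q) c = c := by
      rw [ringEquiv_coe_pow]
      exact Function.iterate_fixed hφc q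
    rw [map_mul, map_inv₀, map_sub, map_one, hψc, hS, map_sum]
    congr 1
    refine Finset.sum_congr rfl fun j _ => ?_
    rw [map_mul, map_pow, hψc, ringEquiv_coe_pow, ← Function.iterate_add_apply,
      add_comm, Function.iterate_add_apply, hα]
end

section
/- Let p be a prime, L a field of characteristic p, and φ a ring automorphism of L. Let d ≥ 1 and let u be a d × d matrix over the prime field 𝔽_p = ZMod p that is invertible and satisfies det(I − u) ≠ 0 (equivalently, 1 is not an eigenvalue of u over any extension of 𝔽_p). Regard u as a matrix over L via the canonical ring homomorphism ZMod p → L. Then for every vector α ∈ L^d for which there exists n ∈ ℕ with φ^[p^n](α_i) = α_i for every coordinate i, there exists β ∈ L^d such that (φ(β_1), …, φ(β_d)) − u·β = α, where u·β denotes matrix-vector multiplication and φ is applied coordinatewise. (In particular, if every element of L is fixed by some p-power iterate of φ, the map v ↦ Φ(v) − u·v is surjective on L^d, where Φ applies φ to each coordinate.) -/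
/-- Higher-dimensional case of the residue-field surjectivity claim in Lemma 3:
for a field `L` of characteristic `p`, a ring automorphism `φ` of `L`, and an
invertible `d × d` matrix `u` over `𝔽_p = ZMod p` with `det (I - u) ≠ 0`, every
vector `α ∈ L^d` whose coordinates are fixed by some `p`-power iterate of `φ`
is of the form `Φ(β) - u·β`, where `Φ` applies `φ` coordinatewise and `u` is
regarded over `L` via the canonical map `ZMod p → L`. -/
theorem stmt1 (p : ℕ) (hp : p.Prime) (L : Type*) [Field L] [CharP L p]
    (φ : L ≃+* L) (d : ℕ) (hd : 1 ≤ d)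
    (u : Matrix (Fin d) (Fin d) (ZMod p)) (hu : IsUnit u)
    (h1 : (1 - u).det ≠ 0) :
    ∀ (α : Fin d → L) (n : ℕ), (∀ i, (⇑φ)^[p ^ n] (α i) = α i) →
      ∃ β : Fin d → L,
        (fun i => φ (β i)) - (u.map ⇑(ZMod.castHom (dvd_refl p) L)).mulVec β = α := by
  intro α n hα
  haveI : Fact p.Prime := ⟨hp⟩
  haveI : Nonempty (Fin d) := Fin.pos_iff_nonempty.mp hd
  set q := p ^ n with hq
  set f : ZMod p →+* L := ZMod.castHom (dvd_refl p) L with hf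
  -- φ fixes the prime field
  have hφf : ∀ c : ZMod p, φ (f c) = f c := by
    intro c
    have h : (φ : L →+* L).comp f = f := RingHom.ext_zmod _ _
    exact DFunLike.congr_fun h c
  have hφfi : ∀ m (c : ZMod p), (⇑φ)^[m] (f c) = f c := by
    intro m c
    induction m with
    | zero => rfl
    | succ m ih => rw [Function.iterate_succ_apply', ih, hφf]
  -- 1 - u ^ q is a unit
  have hcu : IsUnit (1 - u ^ q) := by
    have h1u : IsUnit (1 - u) := by
      rw [Matrix.isUnit_iff_isUnit_det]
      exact isUnit_iff_ne_zero.mpr h1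
    have hpow : (1 - u) ^ q = 1 - u ^ q := by
      rw [hq, sub_pow_char_pow_of_commute p n (Commute.one_left u), one_pow]
    rw [← hpow]
    exact h1u.pow q
  have hwmul : (1 - u ^ q) * (1 - u ^ q)⁻¹ = 1 :=
    Matrix.mul_nonsing_inv _ ((Matrix.isUnit_iff_isUnit_det _).mp hcu)
  set γ : Fin d → L := (((1 - u ^ q)⁻¹).map f).mulVec α with hγ
  -- mapped matrices preserve fixedness under iterates of φ
  have key : ∀ (M : Matrix (Fin d) (Fin d) (ZMod p)) (v : Fin d → L) (m : ℕ),
      (∀ i, (⇑φ)^[m] (v i) = v i) →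
      ∀ i, (⇑φ)^[m] (((M.map f).mulVec v) i) = ((M.map f).mulVec v) i := by
    intro M v m hv i
    have hΨ : ⇑((φ : L →+* L) ^ m) = (⇑φ)^[m] := RingHom.coe_pow _ m
    simp only [Matrix.mulVec, dotProduct, Matrix.map_apply, ← hΨ]
    rw [map_sum]
    refine Finset.sum_congr rfl fun k _ => ?_
    rw [map_mul, hΨ, hφfi m (M i k), hv k]
  have hγfix : ∀ i, (⇑φ)^[q] (γ i) = γ i := key _ α q hα
  -- the family g j
  set g : ℕ → Fin d → L :=
    fun j => ((u ^ j).map f).mulVec (fun i => (⇑φ)^[q - j] (γ i)) with hg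
  refine ⟨∑ j ∈ Finset.range q, ((u ^ j).map f).mulVec (fun i => (⇑φ)^[q - 1 - j] (γ i)), ?_⟩
  funext i
  simp only [Pi.sub_apply]
  have hβi : ∀ i', (∑ j ∈ Finset.range q,
      ((u ^ j).map f).mulVec (fun i => (⇑φ)^[q - 1 - j] (γ i))) i'
      = ∑ j ∈ Finset.range q,
        (((u ^ j).map f).mulVec (fun i => (⇑φ)^[q - 1 - j] (γ i))) i' := by
    intro i'; simp [Finset.sum_apply]
  -- step 1 : φ of each summand is g j
  have step1 : ∀ j ∈ Finset.range q, ∀ i',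
      φ ((((u ^ j).map f).mulVec (fun i => (⇑φ)^[q - 1 - j] (γ i))) i') = g j i' := by
    intro j hj i'
    rw [Finset.mem_range] at hj
    simp only [hg, Matrix.mulVec, dotProduct, Matrix.map_apply]
    rw [map_sum]
    refine Finset.sum_congr rfl fun k _ => ?_
    rw [map_mul, hφf]
    congr 1
    have hsub : q - j = (q - 1 - j) + 1 := by omega
    rw [hsub, Function.iterate_succ_apply']
  -- step 2 : u times each summand is g (j+1)
  have step2 : ∀ j ∈ Finset.range q,
      (u.map f).mulVec (((u ^ j).map f).mulVec (fun i => (⇑φ)^[q - 1 - j] (γ i)))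
      = g (j + 1) := by
    intro j hj
    rw [Finset.mem_range] at hj
    rw [Matrix.mulVec_mulVec, ← Matrix.map_mul, ← pow_succ']
    simp only [hg]
    have hsub : q - (j + 1) = q - 1 - j := by omega
    rw [hsub]
  -- φ (β i)
  have lhs1 : φ ((∑ j ∈ Finset.range q,
      ((u ^ j).map f).mulVec (fun i => (⇑φ)^[q - 1 - j] (γ i))) i)
      = ∑ j ∈ Finset.range q, g j i := by
    rw [hβi, map_sum]
    exact Finset.sum_congr rfl fun j hj => step1 j hj i
  -- u times β
  have mv_sum : (u.map ⇑f).mulVec (∑ j ∈ Finset.range q,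
      ((u ^ j).map f).mulVec (fun i => (⇑φ)^[q - 1 - j] (γ i)))
      = ∑ j ∈ Finset.range q,
        (u.map ⇑f).mulVec (((u ^ j).map f).mulVec (fun i => (⇑φ)^[q - 1 - j] (γ i))) := by
    rw [← Matrix.mulVecLin_apply, map_sum]
    simp [Matrix.mulVecLin_apply]
  have lhs2 : ((u.map ⇑f).mulVec (∑ j ∈ Finset.range q,
      ((u ^ j).map f).mulVec (fun i => (⇑φ)^[q - 1 - j] (γ i)))) i
      = ∑ j ∈ Finset.range q, g (j + 1) i := by
    rw [mv_sum]
    rw [Finset.sum_apply]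
    exact Finset.sum_congr rfl fun j hj => by rw [step2 j hj]
  rw [lhs1, lhs2]
  -- telescoping
  have tele : ∑ j ∈ Finset.range q, g j i - ∑ j ∈ Finset.range q, g (j + 1) i
      = g 0 i - g q i := by
    have h1' : ∑ j ∈ Finset.range (q + 1), g j i
        = (∑ j ∈ Finset.range q, g (j + 1) i) + g 0 i :=
      Finset.sum_range_succ' (fun j => g j i) q
    have h2' : ∑ j ∈ Finset.range (q + 1), g j i
        = (∑ j ∈ Finset.range q, g j i) + g q i :=
      Finset.sum_range_succ (fun j => g j i) q
    have := h1'.symm.trans h2'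
    linear_combination -this
  rw [tele]
  -- compute g 0 and g q
  have hg0 : g 0 i = γ i := by
    simp only [hg, pow_zero, Nat.sub_zero]
    rw [Matrix.map_one f (map_zero f) (map_one f), Matrix.one_mulVec]
    exact hγfix i
  have hgq : g q = ((u ^ q).map f).mulVec γ := by
    simp [hg, Nat.sub_self]
  rw [hg0, hgq]
  -- final computation
  have hfin : ((1 - u ^ q).map f).mulVec γ = α := by
    rw [hγ, Matrix.mulVec_mulVec, ← Matrix.map_mul, hwmul,
      Matrix.map_one f (map_zero f) (map_one f), Matrix.one_mulVec]
  have hmapsub : (1 - u ^ q).map ⇑f = 1 - (u ^ q).map ⇑f := by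
    rw [Matrix.map_sub f (fun a b => map_sub f a b),
      Matrix.map_one f (map_zero f) (map_one f)]
  rw [hmapsub, Matrix.sub_mulVec, Matrix.one_mulVec] at hfin
  have := congrFun hfin i
  simpa using this
end

section
/- Let p be a prime, G a finite p-group, and k a perfect field of characteristic p equipped with an action of G by ring automorphisms. Then the norm map is surjective onto the G-invariants of kˣ: for every a ∈ kˣ with g(a) = a for all g ∈ G, there exists x ∈ kˣ such that ∏_{g ∈ G} g(x) = a. (Equivalently, the Tate cohomology group Ĥ^0(G, kˣ) vanishes.) -/
/-!
A `G`-invariant unit `a` has a unique `p^n`-th root `x` in the perfect field `k`, where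
`|G| = p^n`; uniqueness forces `x` to be `G`-invariant, so its norm is `x ^ |G| = a`.
-/

theorem smul_eq_of_smul_pow_eq {M A : Type*} [Monoid M] [Monoid A] [MulDistribMulAction M A]
    {m : ℕ} (hinj : Function.Injective fun x : A ↦ x ^ m) {g : M} {x : A}
    (h : g • x ^ m = x ^ m) : g • x = x :=
  hinj (by simpa only [smul_pow'] using h)

theorem exists_pow_eq_and_smul_eq_of_smul_eq {R M : Type*} [CommSemiring R] (p n : ℕ)
    [ExpChar R p] [PerfectRing R p] [Monoid M] [MulSemiringAction M R] {a : R}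
    (ha : ∀ g : M, g • a = a) : ∃ x : R, x ^ p ^ n = a ∧ ∀ g : M, g • x = x := by
  have hbij := bijective_iterateFrobenius R p n
  obtain ⟨x, hx⟩ := hbij.surjective a
  rw [iterateFrobenius_def] at hx
  exact ⟨x, hx, fun g ↦ smul_eq_of_smul_pow_eq hbij.injective (by rw [hx, ha])⟩

theorem prod_smul_eq_pow_card_of_forall_smul_eq {G A : Type*} [Fintype G] [CommMonoid A]
    [SMul G A] {x : A} (hx : ∀ g : G, g • x = x) : ∏ g : G, g • x = x ^ Fintype.card G := by
  simp only [hx, Finset.prod_const, Finset.card_univ]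

/-- If `G` is a finite `p`-group acting by ring automorphisms on a perfect field `k`
of characteristic `p`, then the norm map is surjective onto the `G`-invariants of
`kˣ`: every `G`-invariant unit `a` is the norm `∏ g : G, g • x` of some unit `x`
(vanishing of `Ĥ⁰(G, kˣ)`, from the proof of Lemma 2). -/
theorem stmt4 (p : ℕ) (hp : p.Prime) (G : Type) [Group G] [Fintype G]
    (hG : IsPGroup p G) (k : Type) [Field k] [CharP k p] [PerfectField k]
    [MulSemiringAction G k] :
    ∀ a : kˣ, (∀ g : G, g • (a : k) = (a : k)) →
      ∃ x : kˣ, ∏ g : G, g • (x : k) = (a : k) := by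
  intro a ha
  have : Fact p.Prime := ⟨hp⟩
  have : ExpChar k p := .prime hp
  obtain ⟨n, hcard⟩ := IsPGroup.iff_card.mp hG
  obtain ⟨x, hxa, hx⟩ := exists_pow_eq_and_smul_eq_of_smul_eq p n ha
  have hx0 : x ≠ 0 := by
    rintro rfl
    exact a.ne_zero (by rw [← hxa, zero_pow (pow_ne_zero n hp.ne_zero)])
  refine ⟨Units.mk0 x hx0, ?_⟩
  rw [Units.val_mk0, prod_smul_eq_pow_card_of_forall_smul_eq hx, Fintype.card_eq_nat_card,
    hcard, hxa]
end
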